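/- Let E be a right H-comodule algebra, U = E^{coH}, and γ : H → E a convolution-invertible H-comodule algebra map (trivializing section). Then the map ξ : U#H → E, ξ(u#h) = uγ(h), is an isomorphism of left U-modules and right H-comodule algebras, where the action on U used to form U#H is h▷u = Σ γ(h₍₁₎)uγ(Sh₍₂₎). -/

import Mathlib

open TensorProduct

/-- The subalgebra of coinvariants of a right `H`-comodule algebra. -/
def coinv {k H E : Type*} [Field k] [Ring H] [HopfAlgebra k H] [Ring E] [Algebra k E]
    (ρ : E →ₐ[k] E ⊗[k] H) : Subalgebra k E where
  carrier := {u : E | ρ u = u ⊗ₜ (1 : H)}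
  mul_mem' := by
    intro a b ha hb
    simp only [Set.mem_setOf_eq] at *
    rw [map_mul, ha, hb, Algebra.TensorProduct.tmul_mul_tmul, one_mul]
  add_mem' := by
    intro a b ha hb
    simp only [Set.mem_setOf_eq] at *
    rw [map_add, ha, hb, ← TensorProduct.add_tmul]
  algebraMap_mem' := by
    intro r
    simp only [Set.mem_setOf_eq, AlgHom.commutes, Algebra.TensorProduct.algebraMap_apply]

/-- The adjoint-type action `h ▷ u = Σ γ(h₍₁₎) u γ(S h₍₂₎)` as a linear map in `h`. -/
noncomputable def actL {k H E : Type*} [Field k] [Ring H] [HopfAlgebra k H] [Ring E]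
    [Algebra k E] (γ : H →ₐ[k] E) (u : E) : H →ₗ[k] E :=
  LinearMap.mul' k E ∘ₗ
    TensorProduct.map ((LinearMap.mulRight k u) ∘ₗ γ.toLinearMap)
      (γ.toLinearMap ∘ₗ HopfAlgebra.antipode (R := k)) ∘ₗ Coalgebra.comul

/-- The canonical right `H`-coaction on the smash product `U # H`. -/
noncomputable def smashCoact (k : Type*) (U H : Type*) [CommSemiring k] [AddCommMonoid U]
    [Module k U] [Semiring H] [Bialgebra k H] :
    (U ⊗[k] H) →ₗ[k] (U ⊗[k] H) ⊗[k] H :=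
  (TensorProduct.assoc k U H H).symm.toLinearMap ∘ₗ
    LinearMap.lTensor U (Coalgebra.comul (R := k))

/-- The map `ξ : U # H → E`, `ξ(u # h) = u γ(h)`. -/
noncomputable def xiMap {k H E : Type*} [Field k] [Ring H] [HopfAlgebra k H] [Ring E]
    [Algebra k E] (ρ : E →ₐ[k] E ⊗[k] H) (γ : H →ₐ[k] E) :
    ((coinv ρ) ⊗[k] H) →ₗ[k] E :=
  TensorProduct.lift
    (((LinearMap.mul k E) ∘ₗ (coinv ρ).val.toLinearMap).compl₂ γ.toLinearMap)


/-!
The inverse of `ξ` is `x ↦ Σ x₀ γ(S x₁) ⊗ x₂`. Everything reduces to identities in convolution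
algebras `Hom(H, A)`, where an algebra map `φ : H → A` has convolution inverse `φ ∘ S`.
In `Hom(H, E ⊗ H)` we have `ρ ∘ γ = (γ ⊗ 1) * (1 ⊗ id)`, hence
`(1 ⊗ id) * (ρ ∘ γ ∘ S) = γ ∘ S ⊗ 1`; this is what makes `x ↦ Σ x₀ γ(S x₁)` land in the
coinvariants. In `Hom(H, E)` the action `h ↦ h ▷ v` is `(γ · v) * (γ ∘ S)`, hence
`Σ (h₁ ▷ v) γ(h₂) = γ(h) v`, which is multiplicativity of `ξ`.
-/

open Coalgebra HopfAlgebra WithConv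

section Coaction

variable {k H E : Type*} [CommSemiring k] [Semiring H] [HopfAlgebra k H] [Semiring E]
  [Algebra k E]

lemma AlgHom.toConv_mul_toConv_comp_antipode (φ : H →ₐ[k] E) :
    toConv φ.toLinearMap * toConv (φ.toLinearMap ∘ₗ antipode k) = 1 := by
  ext h
  rw [(ℛ k h).convMul_apply]
  simp [← map_mul, ← map_sum, sum_mul_antipode_eq_algebraMap_counit]

lemma AlgHom.toConv_comp_antipode_mul_toConv (φ : H →ₐ[k] E) :
    toConv (φ.toLinearMap ∘ₗ antipode k) * toConv φ.toLinearMap = 1 := by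
  ext h
  rw [(ℛ k h).convMul_apply]
  simp [← map_mul, ← map_sum, sum_antipode_mul_eq_algebraMap_counit]

noncomputable def mulConvInv (γ : H →ₐ[k] E) : E ⊗[k] H →ₗ[k] E :=
  LinearMap.mul' k E ∘ₗ map LinearMap.id (γ.toLinearMap ∘ₗ antipode k)

@[simp] lemma mulConvInv_tmul (γ : H →ₐ[k] E) (e : E) (h : H) :
    mulConvInv γ (e ⊗ₜ h) = e * γ (antipode k h) := rfl

noncomputable def coinvProj (ρ : E →ₐ[k] E ⊗[k] H) (γ : H →ₐ[k] E) : E →ₗ[k] E :=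
  mulConvInv γ ∘ₗ ρ.toLinearMap

open Algebra.TensorProduct in
lemma includeRight_mul_coaction_comp_antipode (ρ : E →ₐ[k] E ⊗[k] H) (γ : H →ₐ[k] E)
    (hγ : ∀ h : H, ρ (γ h) = map γ.toLinearMap LinearMap.id (comul (R := k) h)) :
    toConv (includeRight : H →ₐ[k] E ⊗[k] H).toLinearMap *
        toConv ((ρ.comp γ).toLinearMap ∘ₗ antipode k) =
      toConv ((includeLeft.comp γ : H →ₐ[k] E ⊗[k] H).toLinearMap ∘ₗ antipode k) := by
  set i₁ : H →ₐ[k] E ⊗[k] H := includeLeft.comp γ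
  set i₂ : H →ₐ[k] E ⊗[k] H := includeRight
  have hργ : toConv (ρ.comp γ).toLinearMap = toConv i₁.toLinearMap * toConv i₂.toLinearMap := by
    ext h
    rw [(ℛ k h).convMul_apply]
    simp [i₁, i₂, hγ, ← (ℛ k h).eq, map_sum]
  calc toConv i₂.toLinearMap * toConv ((ρ.comp γ).toLinearMap ∘ₗ antipode k)
      = toConv (i₁.toLinearMap ∘ₗ antipode k) * toConv (ρ.comp γ).toLinearMap *
          toConv ((ρ.comp γ).toLinearMap ∘ₗ antipode k) := by
        rw [hργ, ← mul_assoc, i₁.toConv_comp_antipode_mul_toConv, one_mul]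
    _ = toConv (i₁.toLinearMap ∘ₗ antipode k) := by
        rw [mul_assoc, AlgHom.toConv_mul_toConv_comp_antipode, mul_one]

lemma coaction_coinvProj (ρ : E →ₐ[k] E ⊗[k] H)
    (hcoassoc : ∀ x : E, (TensorProduct.assoc k E H H)
        (LinearMap.rTensor H ρ.toLinearMap (ρ x)) =
      LinearMap.lTensor E (Coalgebra.comul (R := k)) (ρ x))
    (γ : H →ₐ[k] E)
    (hγ : ∀ h : H, ρ (γ h) = map γ.toLinearMap LinearMap.id (comul (R := k) h)) (x : E) :
    ρ (coinvProj ρ γ x) = coinvProj ρ γ x ⊗ₜ 1 := by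
  let L : (E ⊗[k] H) ⊗[k] H →ₗ[k] E ⊗[k] H :=
    LinearMap.mul' k _ ∘ₗ map LinearMap.id ((ρ.comp γ).toLinearMap ∘ₗ antipode k)
  have hρL : ρ.toLinearMap ∘ₗ mulConvInv γ = L ∘ₗ ρ.toLinearMap.rTensor H := by
    ext e h
    simp [L]
  have hL : L ∘ₗ (TensorProduct.assoc k E H H).symm.toLinearMap ∘ₗ comul.lTensor E =
      (TensorProduct.mk k E H).flip 1 ∘ₗ mulConvInv γ := by
    refine TensorProduct.ext' fun e h => ?_
    have key := congr($(includeRight_mul_coaction_comp_antipode ρ γ hγ) h)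
    rw [(ℛ k h).convMul_apply] at key
    simp only [LinearMap.comp_apply, LinearEquiv.coe_coe, LinearMap.lTensor_tmul,
      LinearMap.flip_apply, mulConvInv_tmul]
    calc L ((TensorProduct.assoc k E H H).symm (e ⊗ₜ comul h))
        = (e ⊗ₜ 1) * ∑ i ∈ (ℛ k h).index,
            (1 ⊗ₜ (ℛ k h).left i) * ρ (γ (antipode k ((ℛ k h).right i))) := by
          simp [L, ← (ℛ k h).eq, tmul_sum, Finset.mul_sum, ← mul_assoc]
      _ = (e * γ (antipode k h)) ⊗ₜ 1 := by
          simpa using congr((e ⊗ₜ[k] (1 : H)) * $key)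
  calc ρ (coinvProj ρ γ x) = L (ρ.toLinearMap.rTensor H (ρ x)) :=
        congr($hρL (ρ x))
    _ = L ((TensorProduct.assoc k E H H).symm (comul.lTensor E (ρ x))) := by
        rw [← hcoassoc x, LinearEquiv.symm_apply_apply]
    _ = coinvProj ρ γ x ⊗ₜ 1 := congr($hL (ρ x))

lemma mul'_map_coinvProj_coaction (ρ : E →ₐ[k] E ⊗[k] H)
    (hcoassoc : ∀ x : E, (TensorProduct.assoc k E H H)
        (LinearMap.rTensor H ρ.toLinearMap (ρ x)) =
      LinearMap.lTensor E (Coalgebra.comul (R := k)) (ρ x))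
    (hcounit : ∀ x : E,
      (TensorProduct.rid k E) (LinearMap.lTensor E (Coalgebra.counit (R := k)) (ρ x)) = x)
    (γ : H →ₐ[k] E) (x : E) :
    LinearMap.mul' k E (map (coinvProj ρ γ) γ.toLinearMap (ρ x)) = x := by
  let N : (E ⊗[k] H) ⊗[k] H →ₗ[k] E := LinearMap.mul' k E ∘ₗ map (mulConvInv γ) γ.toLinearMap
  have hN : N ∘ₗ (TensorProduct.assoc k E H H).symm.toLinearMap ∘ₗ comul.lTensor E =
      (TensorProduct.rid k E).toLinearMap ∘ₗ counit.lTensor E := by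
    refine TensorProduct.ext' fun e h => ?_
    simp only [LinearMap.comp_apply, LinearEquiv.coe_coe, LinearMap.lTensor_tmul, rid_tmul]
    calc N ((TensorProduct.assoc k E H H).symm (e ⊗ₜ comul h))
        = e * γ (∑ i ∈ (ℛ k h).index, antipode k ((ℛ k h).left i) * (ℛ k h).right i) := by
          simp [N, ← (ℛ k h).eq, tmul_sum, Finset.mul_sum, mul_assoc]
      _ = e * algebraMap k E (counit (R := k) h) := by
          rw [sum_antipode_mul_eq_algebraMap_counit, AlgHom.commutes]
      _ = counit h • e := by rw [← Algebra.commutes, Algebra.smul_def]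
  calc LinearMap.mul' k E (map (coinvProj ρ γ) γ.toLinearMap (ρ x))
      = N (ρ.toLinearMap.rTensor H (ρ x)) := by
        simp [N, coinvProj]
    _ = N ((TensorProduct.assoc k E H H).symm (comul.lTensor E (ρ x))) := by
        rw [← hcoassoc x, LinearEquiv.symm_apply_apply]
    _ = x := by
        conv_rhs => rw [← hcounit x]
        exact congr($hN (ρ x))

lemma coinvProj_mul_section (ρ : E →ₐ[k] E ⊗[k] H) (γ : H →ₐ[k] E)
    (hγ : ∀ h : H, ρ (γ h) = map γ.toLinearMap LinearMap.id (comul (R := k) h))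
    {u : E} (hu : ρ u = u ⊗ₜ 1) (h : H) :
    coinvProj ρ γ (u * γ h) = counit (R := k) h • u := by
  calc coinvProj ρ γ (u * γ h)
      = u * γ (∑ i ∈ (ℛ k h).index, (ℛ k h).left i * antipode k ((ℛ k h).right i)) := by
        simp [coinvProj, hu, hγ, ← (ℛ k h).eq, map_sum, Finset.mul_sum, mul_assoc]
    _ = u * algebraMap k E (counit (R := k) h) := by
        rw [sum_mul_antipode_eq_algebraMap_counit, AlgHom.commutes]
    _ = counit (R := k) h • u := by rw [← Algebra.commutes, Algebra.smul_def]

end Coaction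

section SmashProduct

variable {k H E : Type*} [Field k] [Ring H] [HopfAlgebra k H] [Ring E] [Algebra k E]

lemma mem_coinv {ρ : E →ₐ[k] E ⊗[k] H} {x : E} : x ∈ coinv ρ ↔ ρ x = x ⊗ₜ 1 := Iff.rfl

lemma xiMap_tmul (ρ : E →ₐ[k] E ⊗[k] H) (γ : H →ₐ[k] E) (u : coinv ρ) (h : H) :
    xiMap ρ γ (u ⊗ₜ h) = u * γ h := rfl

lemma toConv_actL_mul_toConv (γ : H →ₐ[k] E) (v : E) :
    toConv (actL γ v) * toConv γ.toLinearMap = toConv (LinearMap.mulRight k v ∘ₗ γ.toLinearMap) :=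
  calc toConv (actL γ v) * toConv γ.toLinearMap
      = toConv (LinearMap.mulRight k v ∘ₗ γ.toLinearMap) *
          (toConv (γ.toLinearMap ∘ₗ antipode k) * toConv γ.toLinearMap) := mul_assoc _ _ _
    _ = _ := by rw [γ.toConv_comp_antipode_mul_toConv, mul_one]

noncomputable def xiEquiv (ρ : E →ₐ[k] E ⊗[k] H)
    (hcoassoc : ∀ x : E, (TensorProduct.assoc k E H H)
        (LinearMap.rTensor H ρ.toLinearMap (ρ x)) =
      LinearMap.lTensor E (Coalgebra.comul (R := k)) (ρ x))
    (hcounit : ∀ x : E,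
      (TensorProduct.rid k E) (LinearMap.lTensor E (Coalgebra.counit (R := k)) (ρ x)) = x)
    (γ : H →ₐ[k] E)
    (hγ : ∀ h : H, ρ (γ h) = map γ.toLinearMap LinearMap.id (comul (R := k) h)) :
    (coinv ρ ⊗[k] H) ≃ₗ[k] E :=
  let P : E →ₗ[k] coinv ρ := (coinvProj ρ γ).codRestrict (Subalgebra.toSubmodule (coinv ρ))
    fun x => coaction_coinvProj ρ hcoassoc γ hγ x
  have hxiP : xiMap ρ γ ∘ₗ map P LinearMap.id = LinearMap.mul' k E ∘ₗ map (coinvProj ρ γ) γ :=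
    TensorProduct.ext' fun _ _ => rfl
  LinearEquiv.ofLinearMap (xiMap ρ γ) (map P LinearMap.id ∘ₗ ρ.toLinearMap)
    (LinearMap.ext fun x => by
      simpa using congr($hxiP (ρ x)).trans (mul'_map_coinvProj_coaction ρ hcoassoc hcounit γ x))
    (TensorProduct.ext' fun u h => by
      have hPu : ∀ a : H, P (u * γ a) = counit (R := k) a • u := fun a =>
        Subtype.ext (coinvProj_mul_section ρ γ hγ (mem_coinv.1 u.2) a)
      calc map P LinearMap.id (ρ (u * γ h))
          = ∑ i ∈ (ℛ k h).index, P (u * γ ((ℛ k h).left i)) ⊗ₜ (ℛ k h).right i := by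
            simp [mem_coinv.1 u.2, hγ, ← (ℛ k h).eq, map_sum, Finset.mul_sum]
        _ = u ⊗ₜ h := by simp_rw [hPu, smul_tmul, ← tmul_sum, sum_counit_smul])

lemma xiMap_smashMul (ρ : E →ₐ[k] E ⊗[k] H) (γ : H →ₐ[k] E)
    (hact : ∀ (v : coinv ρ) (h : H), actL γ (v : E) h ∈ coinv ρ)
    (smul : ((coinv ρ) ⊗[k] H) →ₗ[k] ((coinv ρ) ⊗[k] H) →ₗ[k] ((coinv ρ) ⊗[k] H))
    (hsmul : ∀ (u v : coinv ρ) (h g : H), smul (u ⊗ₜ h) (v ⊗ₜ g) =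
      TensorProduct.map
        ((LinearMap.mulLeft k u) ∘ₗ
          LinearMap.codRestrict (Subalgebra.toSubmodule (coinv ρ)) (actL γ (v : E))
            (fun h' => hact v h'))
        (LinearMap.mulRight k g) (Coalgebra.comul (R := k) h))
    (x y : coinv ρ ⊗[k] H) :
    xiMap ρ γ (smul x y) = xiMap ρ γ x * xiMap ρ γ y := by
  induction x using TensorProduct.induction_on with
  | zero => simp
  | add a b ha hb => simp only [map_add, LinearMap.add_apply, ha, hb, add_mul]
  | tmul u h =>
    induction y using TensorProduct.induction_on with
    | zero => simp
    | add a b ha hb => simp only [map_add, ha, hb, mul_add]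
    | tmul v g =>
      have hv := congr($(toConv_actL_mul_toConv γ v) h)
      rw [(ℛ k h).convMul_apply] at hv
      simp only [LinearMap.comp_apply, LinearMap.mulRight_apply, AlgHom.toLinearMap_apply] at hv
      calc xiMap ρ γ (smul (u ⊗ₜ h) (v ⊗ₜ g))
          = u * (∑ i ∈ (ℛ k h).index, actL γ v ((ℛ k h).left i) * γ ((ℛ k h).right i)) * γ g := by
            simp [hsmul, xiMap_tmul, ← (ℛ k h).eq, map_sum, Finset.mul_sum, Finset.sum_mul,
              mul_assoc]
            rfl
        _ = xiMap ρ γ (u ⊗ₜ h) * xiMap ρ γ (v ⊗ₜ g) := by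
            rw [hv, xiMap_tmul, xiMap_tmul, mul_assoc, mul_assoc, mul_assoc]

lemma coaction_xiMap (ρ : E →ₐ[k] E ⊗[k] H) (γ : H →ₐ[k] E)
    (hγ : ∀ h : H, ρ (γ h) = map γ.toLinearMap LinearMap.id (comul (R := k) h))
    (x : coinv ρ ⊗[k] H) :
    ρ (xiMap ρ γ x) = map (xiMap ρ γ) LinearMap.id (smashCoact k (coinv ρ) H x) := by
  induction x using TensorProduct.induction_on with
  | zero => simp
  | add a b ha hb => simp only [map_add, ha, hb]
  | tmul u h =>
    simp [xiMap_tmul, smashCoact, mem_coinv.1 u.2, hγ, ← (ℛ k h).eq, map_sum, tmul_sum,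
      Finset.mul_sum]

end SmashProduct

theorem stmt6 {k H E : Type*} [Field k] [Ring H] [HopfAlgebra k H] [Ring E] [Algebra k E]
    (ρ : E →ₐ[k] E ⊗[k] H)
    (hcoassoc : ∀ x : E, (TensorProduct.assoc k E H H)
        (LinearMap.rTensor H ρ.toLinearMap (ρ x)) =
      LinearMap.lTensor E (Coalgebra.comul (R := k)) (ρ x))
    (hcounit : ∀ x : E,
      (TensorProduct.rid k E) (LinearMap.lTensor E (Coalgebra.counit (R := k)) (ρ x)) = x)
    (γ : H →ₐ[k] E)
    (hγ : ∀ h : H, ρ (γ h) =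
      TensorProduct.map γ.toLinearMap LinearMap.id (Coalgebra.comul (R := k) h))
    -- the action `h ▷ u = Σ γ(h₍₁₎) u γ(S h₍₂₎)` preserves the coinvariants …
    (hact : ∀ (v : coinv ρ) (h : H), actL γ (v : E) h ∈ coinv ρ)
    -- … and `smul` is the corresponding smash product multiplication on `U # H`
    (smul : ((coinv ρ) ⊗[k] H) →ₗ[k] ((coinv ρ) ⊗[k] H) →ₗ[k] ((coinv ρ) ⊗[k] H))
    (hsmul : ∀ (u v : coinv ρ) (h g : H), smul (u ⊗ₜ h) (v ⊗ₜ g) =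
      TensorProduct.map
        ((LinearMap.mulLeft k u) ∘ₗ
          LinearMap.codRestrict (Subalgebra.toSubmodule (coinv ρ)) (actL γ (v : E))
            (fun h' => hact v h'))
        (LinearMap.mulRight k g) (Coalgebra.comul (R := k) h)) :
    -- ξ(u # h) = u γ(h)
    (∀ (u : coinv ρ) (h : H), xiMap ρ γ (u ⊗ₜ h) = (u : E) * γ h) ∧
    -- ξ is bijective
    Function.Bijective (xiMap ρ γ) ∧
    -- ξ is an algebra map
    (∀ x y : (coinv ρ) ⊗[k] H, xiMap ρ γ (smul x y) = xiMap ρ γ x * xiMap ρ γ y) ∧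
    (xiMap ρ γ ((1 : coinv ρ) ⊗ₜ (1 : H)) = 1) ∧
    -- ξ is a map of left U-modules
    (∀ (u' u : coinv ρ) (h : H),
      xiMap ρ γ ((u' * u) ⊗ₜ h) = (u' : E) * xiMap ρ γ (u ⊗ₜ h)) ∧
    -- ξ is a map of right H-comodules
    (∀ x : (coinv ρ) ⊗[k] H,
      ρ (xiMap ρ γ x) =
        TensorProduct.map (xiMap ρ γ) LinearMap.id (smashCoact k (coinv ρ) H x)) := by
  refine ⟨xiMap_tmul ρ γ, (xiEquiv ρ hcoassoc hcounit γ hγ).bijective,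
    xiMap_smashMul ρ γ hact smul hsmul, ?_, fun u' u h => ?_, coaction_xiMap ρ γ hγ⟩
  · rw [xiMap_tmul, OneMemClass.coe_one, map_one, one_mul]
  · rw [xiMap_tmul, xiMap_tmul, MulMemClass.coe_mul, mul_assoc]
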